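/- arXiv:0707.0782 — 7 statements merged into one kernel-verified Lean document; each statement's English description precedes it below -/
import Mathlib

section
/- Let G be a compact subgroup of GL(n,ℝ). Then the group G′ = {g ∈ GL(n,ℝ) : p ∘ g = p for every G-invariant polynomial function p on ℝⁿ} is a compact subset of the space of n×n real matrices. -/
/-!
Averaging `ρ(g⁻¹)ᵀ ρ(g⁻¹)` over the Haar measure of the compact group `G` gives a positive
definite `B` with `gᵀ B g = B` for all `g ∈ G`, so the quadratic polynomial `xᵀ B x` is
`G`-invariant. Hence every element of `G′` lies in `{M | Mᵀ B M = B}`, which conjugation by `√B`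
carries into the orthogonal group, a compact set. Finally `G′` is closed, being cut out by
polynomial identities; invertibility comes for free from `Mᵀ B M = B`.
-/

open Matrix MeasureTheory MvPolynomial

open scoped Matrix.Norms.Operator in
theorem Matrix.GeneralLinearGroup.compactSpace_of_isCompact_image_val {ι 𝕜 : Type*} [Fintype ι]
    [DecidableEq ι] [RCLike 𝕜] (G : Subgroup (GL ι 𝕜))
    (hG : IsCompact (Units.val '' (G : Set (GL ι 𝕜)))) : CompactSpace G :=
  isCompact_iff_compactSpace.mp (Units.isOpenEmbedding_val.isCompact_iff.mpr hG)

theorem LinearMap.integral_comp_comm {X E F : Type*} [MeasurableSpace X] {μ : Measure X}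
    [NormedAddCommGroup E] [NormedSpace ℝ E] [FiniteDimensional ℝ E]
    [NormedAddCommGroup F] [NormedSpace ℝ F] [CompleteSpace F]
    (L : E →ₗ[ℝ] F) {φ : X → E} (hφ : Integrable φ μ) :
    ∫ x, L (φ x) ∂μ = L (∫ x, φ x ∂μ) :=
  L.toContinuousLinearMap.integral_comp_comm hφ

namespace Matrix

variable {ι : Type*} [Fintype ι]

section Averaging

open scoped Matrix.Norms.Elementwise

-- Instance search does not find this through the elementwise norm; `Integrable` needs it.
local instance : ContinuousENorm (Matrix ι ι ℝ) := SeminormedAddGroup.toContinuousENorm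

variable {G : Type*} [Group G] [TopologicalSpace G] [IsTopologicalGroup G] [CompactSpace G]
  [MeasurableSpace G] [BorelSpace G] [DecidableEq ι] {ρ : G →* Matrix ι ι ℝ} (μ : Measure G)

-- Averaging over `g⁻¹` makes `ρ`-invariance follow from left invariance of `μ`.
variable (ρ) in
noncomputable def gramAverage : Matrix ι ι ℝ := ∫ g, (ρ g⁻¹)ᵀ * ρ g⁻¹ ∂μ

theorem integrable_transpose_mul_self (hρ : Continuous ρ) [IsFiniteMeasure μ] :
    Integrable (fun g => (ρ g⁻¹)ᵀ * ρ g⁻¹) μ :=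
  (by fun_prop : Continuous fun g => (ρ g⁻¹)ᵀ * ρ g⁻¹).integrable_of_hasCompactSupport
    (.of_compactSpace _)

theorem isHermitian_gramAverage (hρ : Continuous ρ) [IsFiniteMeasure μ] :
    (gramAverage ρ μ).IsHermitian := by
  have := (transposeLinearEquiv ι ι ℝ ℝ).toLinearMap.integral_comp_comm
    (integrable_transpose_mul_self μ hρ)
  simpa [gramAverage, IsHermitian] using this.symm

theorem transpose_mul_gramAverage_mul (hρ : Continuous ρ) [IsFiniteMeasure μ]
    [μ.IsMulLeftInvariant] (h : G) :
    (ρ h)ᵀ * gramAverage ρ μ * ρ h = gramAverage ρ μ := by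
  have hconj (g : G) :
      (ρ h)ᵀ * ((ρ g⁻¹)ᵀ * ρ g⁻¹) * ρ h = (ρ (h⁻¹ * g)⁻¹)ᵀ * ρ (h⁻¹ * g)⁻¹ := by
    rw [_root_.mul_inv_rev, inv_inv, map_mul, transpose_mul]
    simp only [Matrix.mul_assoc]
  calc (ρ h)ᵀ * gramAverage ρ μ * ρ h
      = ∫ g, (ρ h)ᵀ * ((ρ g⁻¹)ᵀ * ρ g⁻¹) * ρ h ∂μ :=
        ((LinearMap.mulRight ℝ (ρ h) ∘ₗ LinearMap.mulLeft ℝ (ρ h)ᵀ).integral_comp_comm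
          (integrable_transpose_mul_self μ hρ)).symm
    _ = gramAverage ρ μ := by
        simp only [hconj]
        exact integral_mul_left_eq_self (fun g => (ρ g⁻¹)ᵀ * ρ g⁻¹) h⁻¹

theorem dotProduct_gramAverage_mulVec (hρ : Continuous ρ) [IsFiniteMeasure μ] (x : ι → ℝ) :
    x ⬝ᵥ (gramAverage ρ μ *ᵥ x) = ∫ g, (ρ g⁻¹ *ᵥ x) ⬝ᵥ (ρ g⁻¹ *ᵥ x) ∂μ := by
  let q : Matrix ι ι ℝ →ₗ[ℝ] ℝ :=
    { toFun := fun A => x ⬝ᵥ (A *ᵥ x)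
      map_add' := fun A A' => by rw [add_mulVec, dotProduct_add]
      map_smul' := fun c A => by rw [smul_mulVec, dotProduct_smul, RingHom.id_apply] }
  have hq (g : G) : q ((ρ g⁻¹)ᵀ * ρ g⁻¹) = (ρ g⁻¹ *ᵥ x) ⬝ᵥ (ρ g⁻¹ *ᵥ x) := by
    rw [LinearMap.coe_mk, AddHom.coe_mk, ← mulVec_mulVec, dotProduct_mulVec, vecMul_transpose]
  have := q.integral_comp_comm (integrable_transpose_mul_self μ hρ)
  simp only [hq] at this
  exact this.symm

theorem posDef_gramAverage (hρ : Continuous ρ) [IsFiniteMeasure μ] [μ.IsOpenPosMeasure] :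
    (gramAverage ρ μ).PosDef := by
  refine .of_dotProduct_mulVec_pos (isHermitian_gramAverage μ hρ) fun x hx => ?_
  rw [star_trivial, dotProduct_gramAverage_mulVec μ hρ]
  have hρx : Continuous fun g => ρ g⁻¹ *ᵥ x := by fun_prop
  refine integral_pos_of_integrable_nonneg_nonzero (x := 1) (hρx.dotProduct hρx)
    ((hρx.dotProduct hρx).integrable_of_hasCompactSupport (.of_compactSpace _))
    (fun g => dotProduct_self_star_nonneg _) ?_
  simpa using hx

end Averaging

section Compactness

variable [DecidableEq ι] {𝕜 : Type*} [RCLike 𝕜]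

theorem isCompact_unitaryGroup : IsCompact (unitaryGroup ι 𝕜 : Set (Matrix ι ι 𝕜)) :=
  (isCompact_closedBall (0 : 𝕜) 1).matrix.of_isClosed_subset isClosed_unitary
    fun _ hU i j => mem_closedBall_zero_iff.mpr (entry_norm_bound_of_unitary hU i j)

open scoped ComplexOrder MatrixOrder in
theorem PosDef.isCompact_setOf_conjTranspose_mul_mul_eq {B : Matrix ι ι 𝕜} (hB : B.PosDef) :
    IsCompact {M | Mᴴ * B * M = B} := by
  obtain ⟨C, hC⟩ : IsUnit (CFC.sqrt B) :=
    (CFC.isUnit_sqrt_iff B hB.posSemidef.nonneg).mpr hB.isUnit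
  set c : Matrix ι ι 𝕜 := ↑C
  set d : Matrix ι ι 𝕜 := ↑C⁻¹
  have hcc : star c * c = B := by
    rw [hC, (CFC.sqrt_nonneg B).isSelfAdjoint.star_eq,
      CFC.sqrt_mul_sqrt_self B hB.posSemidef.nonneg]
  have hcd : c * d = 1 := C.mul_inv
  have hdc : d * c = 1 := C.inv_mul
  refine (isCompact_unitaryGroup.image (f := fun U => d * U * c) (by fun_prop)).of_isClosed_subset
    (isClosed_eq (by fun_prop) continuous_const) fun M (hM : star M * B * M = B) =>
      ⟨c * M * d, ?_, by simp [mul_assoc, hdc, ← mul_assoc d c]⟩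
  rw [SetLike.mem_coe, mem_unitaryGroup_iff']
  calc star (c * M * d) * (c * M * d) = star d * (star M * (star c * c) * M) * d := by
        simp only [star_mul, mul_assoc]
    _ = star (c * d) * (c * d) := by rw [hcc, hM, ← hcc, star_mul]; simp only [mul_assoc]
    _ = 1 := by rw [hcd, star_one, one_mul]

end Compactness

open scoped ComplexOrder MatrixOrder in
theorem IsHermitian.eq_of_dotProduct_mulVec_eq {𝕜 : Type*} [RCLike 𝕜] {A B : Matrix ι ι 𝕜}
    (hA : A.IsHermitian) (hB : B.IsHermitian)
    (h : ∀ x, star x ⬝ᵥ (A *ᵥ x) = star x ⬝ᵥ (B *ᵥ x)) : A = B :=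
  le_antisymm
    (posSemidef_iff_dotProduct_mulVec.mpr ⟨hB.sub hA, fun x => by
      rw [sub_mulVec, dotProduct_sub, h, sub_self]⟩)
    (posSemidef_iff_dotProduct_mulVec.mpr ⟨hA.sub hB, fun x => by
      rw [sub_mulVec, dotProduct_sub, h, sub_self]⟩)

theorem isUnit_of_transpose_mul_mul_eq {R : Type*} [CommRing R] [DecidableEq ι]
    {B M : Matrix ι ι R} (hB : IsUnit B) (h : Mᵀ * B * M = B) : IsUnit M := by
  rw [isUnit_iff_isUnit_det] at hB ⊢
  have hdet := congrArg det h
  rw [det_mul, det_mul, det_transpose] at hdet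
  exact isUnit_of_mul_isUnit_right (hdet ▸ hB)

end Matrix

section InvariantPolynomials

variable {ι R : Type*} [Fintype ι] [CommRing R]

def Matrix.PreservesPoly (M : Matrix ι ι R) (q : MvPolynomial ι R) : Prop :=
  ∀ x, eval (M *ᵥ x) q = eval x q

theorem Matrix.isClosed_setOf_forall_preservesPoly [TopologicalSpace R] [IsTopologicalRing R]
    [T2Space R] (Q : Set (MvPolynomial ι R)) :
    IsClosed {M : Matrix ι ι R | ∀ q ∈ Q, M.PreservesPoly q} := by
  simp only [PreservesPoly, Set.ofPred_forall]
  exact isClosed_biInter fun q _ => isClosed_iInter fun x =>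
    isClosed_eq ((continuous_eval q).comp (continuous_id.matrix_mulVec continuous_const))
      continuous_const

noncomputable def MvPolynomial.quadratic (B : Matrix ι ι R) : MvPolynomial ι R :=
  ∑ i, ∑ j, C (B i j) * X i * X j

theorem MvPolynomial.eval_quadratic (B : Matrix ι ι R) (x : ι → R) :
    eval x (quadratic B) = x ⬝ᵥ (B *ᵥ x) := by
  simp only [quadratic, map_sum, map_mul, eval_C, eval_X, dotProduct, mulVec, Finset.mul_sum]
  exact Finset.sum_congr rfl fun i _ => Finset.sum_congr rfl fun j _ => by ring

theorem Matrix.preservesPoly_quadratic_iff {B M : Matrix ι ι ℝ} (hB : B.IsHermitian) :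
    M.PreservesPoly (quadratic B) ↔ Mᵀ * B * M = B := by
  have hform (x : ι → ℝ) : eval (M *ᵥ x) (quadratic B) = x ⬝ᵥ ((Mᵀ * B * M) *ᵥ x) := by
    rw [eval_quadratic, ← mulVec_mulVec, ← mulVec_mulVec, dotProduct_mulVec x,
      vecMul_transpose]
  simp only [PreservesPoly, hform, eval_quadratic]
  refine ⟨fun h => IsHermitian.eq_of_dotProduct_mulVec_eq ?_ hB (by simpa using h),
    fun h x => by rw [h]⟩
  simpa only [conjTranspose_eq_transpose_of_trivial] using isHermitian_conjTranspose_mul_mul M hB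

end InvariantPolynomials

/-- If `G` is a compact subgroup of `GL(n, ℝ)`, then the group
`G′` of all `g ∈ GL(n, ℝ)` preserving every `G`-invariant polynomial function on `ℝⁿ`
is a compact subset of the space of `n × n` real matrices. -/
theorem Gprime_isCompact_of_isCompact
    (n : ℕ) (G : Subgroup (GL (Fin n) ℝ))
    (hG : IsCompact {M : Matrix (Fin n) (Fin n) ℝ | ∃ g ∈ G, (g : Matrix (Fin n) (Fin n) ℝ) = M}) :
    IsCompact {M : Matrix (Fin n) (Fin n) ℝ | ∃ g : GL (Fin n) ℝ,
      (∀ q : MvPolynomial (Fin n) ℝ,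
        (∀ h ∈ G, ∀ x : Fin n → ℝ,
          MvPolynomial.eval ((h : Matrix (Fin n) (Fin n) ℝ).mulVec x) q = MvPolynomial.eval x q) →
        ∀ x : Fin n → ℝ,
          MvPolynomial.eval ((g : Matrix (Fin n) (Fin n) ℝ).mulVec x) q = MvPolynomial.eval x q) ∧
      (g : Matrix (Fin n) (Fin n) ℝ) = M} := by
  have : CompactSpace G := GeneralLinearGroup.compactSpace_of_isCompact_image_val G hG
  let : MeasurableSpace G := borel G
  have : BorelSpace G := ⟨rfl⟩
  let ρ : G →* Matrix (Fin n) (Fin n) ℝ := (Units.coeHom _).comp G.subtype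
  have hρ : Continuous ρ := Units.continuous_val.comp continuous_subtype_val
  set B := gramAverage ρ Measure.haar
  have hB : B.PosDef := posDef_gramAverage _ hρ
  have hquad (M : Matrix (Fin n) (Fin n) ℝ) : M.PreservesPoly (quadratic B) ↔ Mᵀ * B * M = B :=
    preservesPoly_quadratic_iff hB.isHermitian
  let Q := {q | ∀ h ∈ G, (h : Matrix (Fin n) (Fin n) ℝ).PreservesPoly q}
  have hBQ : quadratic B ∈ Q := fun h hh =>
    (hquad h).mpr (transpose_mul_gramAverage_mul _ hρ ⟨h, hh⟩)
  have hK : IsCompact {M : Matrix (Fin n) (Fin n) ℝ | ∀ q ∈ Q, M.PreservesPoly q} :=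
    hB.isCompact_setOf_conjTranspose_mul_mul_eq.of_isClosed_subset
      (isClosed_setOf_forall_preservesPoly Q) fun M hM => by
        simpa only [Set.mem_ofPred_eq, conjTranspose_eq_transpose_of_trivial] using
          (hquad M).mp (hM _ hBQ)
  convert hK using 1
  refine Set.ext fun M => ⟨fun ⟨g, hg, hgM⟩ => hgM ▸ hg, fun hM => ?_⟩
  obtain ⟨g, rfl⟩ := isUnit_of_transpose_mul_mul_eq hB.isUnit ((hquad M).mp (hM _ hBQ))
  exact ⟨g, hM, rfl⟩
end

section
/- Let n ≥ 2. An element g ∈ GL(n,ℝ) satisfies p ∘ g = p for every SO(n)-invariant polynomial function p on ℝⁿ if and only if g belongs to the orthogonal group O(n). (That is, SO(n)′ = O(n).) -/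
/-!
The sum of squares `∑ Xᵢ²` is `SO(n)`-invariant, so every `g ∈ SO(n)′` preserves `x ⬝ᵥ x`;
by polarization it preserves the dot product, i.e. `gᵀ g = 1`.
Conversely, let `g ∈ O(n)` with `det g = -1` and `x ∈ ℝⁿ`. Since `n ≥ 2` there is a nonzero `v`
orthogonal to `x`, and the Householder reflection `r` in `v` fixes `x` and has determinant `-1`.
Then `g r ∈ SO(n)`, so for an `SO(n)`-invariant `p` we get `p (g x) = p (g r x) = p x`.
-/

open Matrix

variable {ι K : Type*} [Fintype ι]

section Orthogonal

variable [CommRing K]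

lemma mulVec_dotProduct_mulVec (M : Matrix ι ι K) (x y : ι → K) :
    M *ᵥ x ⬝ᵥ M *ᵥ y = x ⬝ᵥ (Mᵀ * M) *ᵥ y := by
  rw [← mulVec_mulVec, dotProduct_mulVec x, vecMul_transpose]

lemma mulVec_dotProduct_mulVec_of_transpose_mul_self_eq_one [DecidableEq ι] {M : Matrix ι ι K}
    (hM : Mᵀ * M = 1) (x y : ι → K) : M *ᵥ x ⬝ᵥ M *ᵥ y = x ⬝ᵥ y := by
  rw [mulVec_dotProduct_mulVec, hM, one_mulVec]

lemma transpose_mul_self_eq_one_of_mulVec_dotProduct_mulVec [DecidableEq ι] {M : Matrix ι ι K}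
    (hM : ∀ x y, M *ᵥ x ⬝ᵥ M *ᵥ y = x ⬝ᵥ y) : Mᵀ * M = 1 := by
  refine ext_iff_mulVec.mpr fun y => ?_
  rw [← sub_eq_zero, one_mulVec]
  refine dotProduct_eq_zero _ fun x => ?_
  rw [dotProduct_comm, dotProduct_sub, ← mulVec_dotProduct_mulVec, hM, sub_self]

lemma mulVec_dotProduct_mulVec_of_mulVec_dotProduct_self [NeZero (2 : K)] [IsDomain K]
    {M : Matrix ι ι K} (hM : ∀ x, M *ᵥ x ⬝ᵥ M *ᵥ x = x ⬝ᵥ x) (x y : ι → K) :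
    M *ᵥ x ⬝ᵥ M *ᵥ y = x ⬝ᵥ y := by
  have hxy := hM (x + y)
  simp only [mulVec_add, add_dotProduct, dotProduct_add, hM x, hM y,
    dotProduct_comm (M *ᵥ y), dotProduct_comm y] at hxy
  refine mul_left_cancel₀ (two_ne_zero (α := K)) ?_
  linear_combination hxy

end Orthogonal

section Householder

variable [Field K] [DecidableEq ι]

def householder (v : ι → K) : Matrix ι ι K := 1 - (2 / (v ⬝ᵥ v)) • vecMulVec v v

lemma householder_transpose (v : ι → K) : (householder v)ᵀ = householder v := by
  simp [householder, transpose_sub, transpose_smul, transpose_vecMulVec]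

lemma householder_mulVec_of_dotProduct_eq_zero {v x : ι → K} (hx : v ⬝ᵥ x = 0) :
    householder v *ᵥ x = x := by
  simp [householder, sub_mulVec, smul_mulVec, vecMulVec_mulVec, hx]

lemma householder_mul_self {v : ι → K} (hv : v ⬝ᵥ v ≠ 0) :
    householder v * householder v = 1 := by
  have hc : 2 / (v ⬝ᵥ v) * (2 / (v ⬝ᵥ v)) * (v ⬝ᵥ v) = 2 / (v ⬝ᵥ v) + 2 / (v ⬝ᵥ v) := by
    field_simp; ring
  simp only [householder, mul_sub, sub_mul, mul_one, one_mul, smul_mul_smul_comm,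
    vecMulVec_mul_vecMulVec, vecMulVec_smul, smul_smul, hc, add_smul]
  abel

lemma det_householder {v : ι → K} (hv : v ⬝ᵥ v ≠ 0) : (householder v).det = -1 := by
  have : householder v = 1 + replicateCol Unit (-(2 / (v ⬝ᵥ v)) • v) * replicateRow Unit v := by
    rw [← vecMulVec_eq, householder, smul_vecMulVec, neg_smul, sub_eq_add_neg]
  rw [this, det_one_add_replicateCol_mul_replicateRow, dotProduct_smul, smul_eq_mul, neg_mul,
    div_mul_cancel₀ _ hv]
  norm_num

end Householder

lemma exists_mul_transpose_eq_one_det_eq_neg_one_mulVec_eq [Field K] [LinearOrder K]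
    [IsStrictOrderedRing K] [DecidableEq ι] [Nontrivial ι] (x : ι → K) :
    ∃ r : Matrix ι ι K, r * rᵀ = 1 ∧ r.det = -1 ∧ r *ᵥ x = x := by
  obtain ⟨v, hv, hvx⟩ := exists_ne_zero_dotProduct_eq_zero x
  have hvv : v ⬝ᵥ v ≠ 0 := dotProduct_self_eq_zero.not.mpr hv
  exact ⟨householder v, by rw [householder_transpose, householder_mul_self hvv],
    det_householder hvv, householder_mulVec_of_dotProduct_eq_zero hvx⟩

lemma apply_mulVec_eq_of_forall_det_eq_one [Field K] [LinearOrder K] [IsStrictOrderedRing K]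
    [DecidableEq ι] [Nontrivial ι] {α : Type*} {f : (ι → K) → α}
    (hf : ∀ h : Matrix ι ι K, h * hᵀ = 1 → h.det = 1 → ∀ x, f (h *ᵥ x) = f x)
    {g : Matrix ι ι K} (hg : g * gᵀ = 1) (x : ι → K) : f (g *ᵥ x) = f x := by
  have hdet : g.det * g.det = 1 := by
    simpa only [det_mul, det_transpose, det_one] using congrArg det hg
  rcases mul_self_eq_one_iff.mp hdet with hdet | hdet
  · exact hf g hg hdet x
  obtain ⟨r, hr, hrdet, hrx⟩ := exists_mul_transpose_eq_one_det_eq_neg_one_mulVec_eq x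
  have hgr : g * r * (g * r)ᵀ = 1 := by
    rw [transpose_mul, Matrix.mul_assoc, ← Matrix.mul_assoc r, hr, Matrix.one_mul, hg]
  have := hf (g * r) hgr (by rw [det_mul, hdet, hrdet]; norm_num) x
  rwa [← mulVec_mulVec, hrx] at this

lemma eval_sum_X_sq [CommRing K] (x : ι → K) :
    MvPolynomial.eval x (∑ i, MvPolynomial.X i ^ 2) = x ⬝ᵥ x := by
  simp [dotProduct, sq]

lemma eval_sum_X_sq_mulVec [CommRing K] [DecidableEq ι] {M : Matrix ι ι K} (hM : M * Mᵀ = 1)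
    (x : ι → K) :
    MvPolynomial.eval (M *ᵥ x) (∑ i, MvPolynomial.X i ^ 2) =
      MvPolynomial.eval x (∑ i, MvPolynomial.X i ^ 2) := by
  rw [eval_sum_X_sq, eval_sum_X_sq,
    mulVec_dotProduct_mulVec_of_transpose_mul_self_eq_one (mul_eq_one_comm.mp hM)]

/-- For `n ≥ 2`, an element `g ∈ GL(n, ℝ)` fixes every `SO(n)`-invariant
polynomial function on `ℝⁿ` if and only if `g` is an orthogonal matrix: `SO(n)′ = O(n)`. -/
theorem SO_prime_eq_O
    (n : ℕ) (hn : 2 ≤ n) (g : GL (Fin n) ℝ) :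
    (∀ q : MvPolynomial (Fin n) ℝ,
      (∀ h : Matrix (Fin n) (Fin n) ℝ, h * hᵀ = 1 → h.det = 1 →
        ∀ x : Fin n → ℝ, MvPolynomial.eval (h.mulVec x) q = MvPolynomial.eval x q) →
      ∀ x : Fin n → ℝ,
        MvPolynomial.eval ((g : Matrix (Fin n) (Fin n) ℝ).mulVec x) q = MvPolynomial.eval x q)
    ↔ (g : Matrix (Fin n) (Fin n) ℝ) * (g : Matrix (Fin n) (Fin n) ℝ)ᵀ = 1 := by
  have : Nontrivial (Fin n) := Fin.nontrivial_iff_two_le.mpr hn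
  refine ⟨fun hg => ?_, fun hg q hq =>
    apply_mulVec_eq_of_forall_det_eq_one (f := fun x => MvPolynomial.eval x q) hq hg⟩
  have hnorm : ∀ x, (g : Matrix (Fin n) (Fin n) ℝ) *ᵥ x ⬝ᵥ (g : Matrix (Fin n) (Fin n) ℝ) *ᵥ x
      = x ⬝ᵥ x := fun x => by
    simpa only [eval_sum_X_sq] using hg _ (fun h hh _ => eval_sum_X_sq_mulVec hh) x
  exact mul_eq_one_comm.mp <| transpose_mul_self_eq_one_of_mulVec_dotProduct_mulVec <|
    mulVec_dotProduct_mulVec_of_mulVec_dotProduct_self hnorm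
end

section
/- Let n ≥ 1 and regard ℂⁿ as a real vector space of dimension 2n. A real-linear bijection g : ℂⁿ → ℂⁿ satisfies p ∘ g = p for every U(n)-invariant real polynomial function p on ℂⁿ if and only if g preserves the Euclidean norm, i.e. ‖g(x)‖ = ‖x‖ for all x (g lies in the orthogonal group O(2n) of the underlying real inner product space). (That is, U(n)′ = O(2n).) -/
/-!
The squared norm is a `U(n)`-invariant polynomial in the real and imaginary parts, so a map
fixing all invariant polynomials preserves the norm. Conversely, `U(n)` acts transitively on
each sphere (extend the two normalized vectors to orthonormal bases), so every `U(n)`-invariant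
function depends only on the norm and is therefore fixed by a norm-preserving `g`.
-/

open Matrix

section Transitivity

variable {𝕜 E : Type*} [RCLike 𝕜] [NormedAddCommGroup E] [InnerProductSpace 𝕜 E]
  [FiniteDimensional 𝕜 E]

theorem exists_orthonormalBasis_apply_eq {e : E} (he : ‖e‖ = 1)
    (i : Fin (Module.finrank 𝕜 E)) :
    ∃ b : OrthonormalBasis (Fin (Module.finrank 𝕜 E)) 𝕜 E, b i = e := by
  have hsingle : Orthonormal 𝕜 (({i} : Set (Fin (Module.finrank 𝕜 E))).domRestrict fun _ => e) := by
    refine ⟨fun _ => he, fun j k hjk => absurd ?_ hjk⟩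
    exact Subtype.ext (j.2.trans k.2.symm)
  obtain ⟨b, hb⟩ := hsingle.exists_orthonormalBasis_extension_of_card_eq (Fintype.card_fin _).symm
  exact ⟨b, hb i rfl⟩

theorem exists_linearIsometryEquiv_apply_eq {v w : E} (h : ‖v‖ = ‖w‖) :
    ∃ f : E ≃ₗᵢ[𝕜] E, f v = w := by
  rcases eq_or_ne v 0 with rfl | hv
  · exact ⟨LinearIsometryEquiv.refl 𝕜 E, (norm_eq_zero.mp (by simpa using h.symm)).symm⟩
  have hw : w ≠ 0 := norm_ne_zero_iff.mp (h ▸ norm_ne_zero_iff.mpr hv)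
  have : Nontrivial E := ⟨⟨v, 0, hv⟩⟩
  let i : Fin (Module.finrank 𝕜 E) := ⟨0, Module.finrank_pos⟩
  obtain ⟨b, hb⟩ := exists_orthonormalBasis_apply_eq (norm_smul_inv_norm (𝕜 := 𝕜) hv) i
  obtain ⟨c, hc⟩ := exists_orthonormalBasis_apply_eq (norm_smul_inv_norm (𝕜 := 𝕜) hw) i
  refine ⟨b.equiv c (Equiv.refl _), ?_⟩
  have hv_eq : v = (‖v‖ : 𝕜) • b i := by
    rw [hb, smul_smul, mul_inv_cancel₀ (by simpa using hv), one_smul]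
  rw [hv_eq, map_smul, OrthonormalBasis.equiv_apply_basis, Equiv.refl_apply, hc, smul_smul, h,
    mul_inv_cancel₀ (by simpa using hw), one_smul]

end Transitivity

section UnitaryGroup

variable {𝕜 ι : Type*} [RCLike 𝕜] [Fintype ι] [DecidableEq ι]

theorem norm_toLp_mulVec_of_mem_unitaryGroup {u : Matrix ι ι 𝕜}
    (hu : u ∈ unitaryGroup ι 𝕜) (x : EuclideanSpace 𝕜 ι) :
    ‖(WithLp.toLp 2 (u *ᵥ x) : EuclideanSpace 𝕜 ι)‖ = ‖x‖ :=
  Unitary.norm_map ⟨toEuclideanCLM (n := ι) (𝕜 := 𝕜) u, Unitary.map_mem _ hu⟩ x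

theorem exists_mem_unitaryGroup_toLp_mulVec_eq {v w : EuclideanSpace 𝕜 ι} (h : ‖v‖ = ‖w‖) :
    ∃ u ∈ unitaryGroup ι 𝕜, (WithLp.toLp 2 (u *ᵥ v) : EuclideanSpace 𝕜 ι) = w := by
  obtain ⟨f, hf⟩ := exists_linearIsometryEquiv_apply_eq (𝕜 := 𝕜) h
  let U : unitary (EuclideanSpace 𝕜 ι →L[𝕜] EuclideanSpace 𝕜 ι) :=
    Unitary.linearIsometryEquiv.symm f
  refine ⟨(toEuclideanCLM (n := ι) (𝕜 := 𝕜)).symm U, Unitary.map_mem _ U.2, ?_⟩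
  rw [← toEuclideanCLM_toLp, StarAlgEquiv.apply_symm_apply]
  exact hf

end UnitaryGroup

theorem exists_mvPolynomial_eval_re_im_eq_norm_sq (n : ℕ) :
    ∃ q : MvPolynomial (Fin n ⊕ Fin n) ℝ, ∀ x : EuclideanSpace ℂ (Fin n),
      ‖x‖ ^ 2 = MvPolynomial.eval (Sum.elim (fun i => (x i).re) (fun i => (x i).im)) q := by
  refine ⟨∑ i, (MvPolynomial.X (Sum.inl i) ^ 2 + MvPolynomial.X (Sum.inr i) ^ 2), fun x => ?_⟩
  simp only [map_sum, map_add, map_pow, MvPolynomial.eval_X, Sum.elim_inl, Sum.elim_inr,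
    EuclideanSpace.norm_sq_eq, Complex.sq_norm, Complex.normSq_apply, ← sq]

theorem U_prime_eq_O_general
    (n : ℕ)
    (g : EuclideanSpace ℂ (Fin n) ≃ₗ[ℝ] EuclideanSpace ℂ (Fin n)) :
    (∀ p : EuclideanSpace ℂ (Fin n) → ℝ,
      (∃ q : MvPolynomial (Fin n ⊕ Fin n) ℝ,
        ∀ x : EuclideanSpace ℂ (Fin n),
          p x = MvPolynomial.eval (Sum.elim (fun i => (x i).re) (fun i => (x i).im)) q) →
      (∀ u ∈ Matrix.unitaryGroup (Fin n) ℂ, ∀ x : EuclideanSpace ℂ (Fin n),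
        p ((WithLp.toLp 2 (Matrix.mulVec u x : Fin n → ℂ)) : EuclideanSpace ℂ (Fin n)) = p x) →
      ∀ x : EuclideanSpace ℂ (Fin n), p (g x) = p x)
    ↔ ∀ x : EuclideanSpace ℂ (Fin n), ‖g x‖ = ‖x‖ := by
  constructor
  · intro h x
    have hsq := h (‖·‖ ^ 2) (exists_mvPolynomial_eval_re_im_eq_norm_sq n)
      (fun u hu y => by simp only [norm_toLp_mulVec_of_mem_unitaryGroup hu]) x
    exact (sq_eq_sq₀ (norm_nonneg _) (norm_nonneg _)).mp hsq
  · intro hg p _ hinv x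
    obtain ⟨u, hu, hux⟩ := exists_mem_unitaryGroup_toLp_mulVec_eq (hg x).symm
    rw [← hux, hinv u hu x]

/-- For `n ≥ 1`, a real-linear bijection `g` of `ℂⁿ` (viewed as a real vector
space) fixes every `U(n)`-invariant real polynomial function on `ℂⁿ` if and only if `g`
preserves the Euclidean norm: `U(n)′ = O(2n)`. -/
theorem U_prime_eq_O
    (n : ℕ) (hn : 1 ≤ n)
    (g : EuclideanSpace ℂ (Fin n) ≃ₗ[ℝ] EuclideanSpace ℂ (Fin n)) :
    (∀ p : EuclideanSpace ℂ (Fin n) → ℝ,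
      (∃ q : MvPolynomial (Fin n ⊕ Fin n) ℝ,
        ∀ x : EuclideanSpace ℂ (Fin n),
          p x = MvPolynomial.eval (Sum.elim (fun i => (x i).re) (fun i => (x i).im)) q) →
      (∀ u ∈ Matrix.unitaryGroup (Fin n) ℂ, ∀ x : EuclideanSpace ℂ (Fin n),
        p ((WithLp.toLp 2 (Matrix.mulVec u x : Fin n → ℂ)) : EuclideanSpace ℂ (Fin n)) = p x) →
      ∀ x : EuclideanSpace ℂ (Fin n), p (g x) = p x)
    ↔ ∀ x : EuclideanSpace ℂ (Fin n), ‖g x‖ = ‖x‖ :=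
  U_prime_eq_O_general n g
end

section
/- Let n ≥ 2 and, for x ∈ ℝⁿ with xₙ ≠ 0, define P₁(x),…,P_{n−1}(x) as follows: R(x) = exp(−(x_{n−1}/xₙ)X)·x, Qᵣ(x) = the r-th coordinate of R(x), Pᵣ(x) = xₙ^{n−r−1}·Qᵣ(x) for 1 ≤ r ≤ n−2, and P_{n−1}(x) = xₙ. Then the functions P₁,…,P_{n−1} are algebraically independent: there is no nonzero polynomial F in n−1 variables over ℝ such that F(P₁(x),…,P_{n−1}(x)) = 0 for all x ∈ ℝⁿ with xₙ ≠ 0. -/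
open Matrix

/-- The regular nilpotent Jordan block: `X_{i,i+1} = 1`, all other entries `0`. -/
noncomputable def jordanX (n : ℕ) : Matrix (Fin n) (Fin n) ℝ :=
  Matrix.of fun i j => if (i : ℕ) + 1 = (j : ℕ) then 1 else 0

/-- The action of the one-parameter unipotent group `{exp(tX) : t ∈ ℝ}` on `ℝⁿ`. -/
noncomputable def uniAct (n : ℕ) (t : ℝ) (x : Fin n → ℝ) : Fin n → ℝ :=
  (NormedSpace.exp (t • jordanX n)).mulVec x

/-- The rational invariants `P₁, …, P_{n-1}` (indexed here by `r : Fin (n-1)`, so that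
`invP n hn r` is `P_{r+1}`): with `R(x) = exp(−(x_{n−1}/xₙ)X)·x` and `Qᵣ(x)` its `r`-th
coordinate, `Pᵣ(x) = xₙ^{n−r−1}·Qᵣ(x)` for `1 ≤ r ≤ n−2` and `P_{n−1}(x) = xₙ`. -/
noncomputable def invP (n : ℕ) (hn : 2 ≤ n) (r : Fin (n - 1)) (x : Fin n → ℝ) : ℝ :=
  if (r : ℕ) = n - 2 then x ⟨n - 1, by omega⟩
  else (x ⟨n - 1, by omega⟩) ^ (n - (r : ℕ) - 2) *
    uniAct n (-(x ⟨n - 2, by omega⟩ / x ⟨n - 1, by omega⟩)) x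
      ⟨(r : ℕ), lt_of_lt_of_le r.isLt (Nat.sub_le n 1)⟩

/-
The map `x ↦ (P₁(x), …, P_{n−1}(x))` is onto `{y : y_{n−1} ≠ 0}`: on points with `x_{n−1} = 0`
the group element `R` is the identity, so the `Pᵣ` are just rescaled coordinates and can be
prescribed freely. A polynomial relation among the `Pᵣ` therefore vanishes off a coordinate
hyperplane, hence everywhere, hence is zero.
-/

lemma uniAct_zero (n : ℕ) (x : Fin n → ℝ) : uniAct n 0 x = x := by
  simp [uniAct]

theorem MvPolynomial.eq_zero_of_eval_eq_zero_of_ne_zero {σ R : Type*} [CommRing R] [IsDomain R]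
    [Infinite R] {F : MvPolynomial σ R} (i : σ) (h : ∀ y : σ → R, y i ≠ 0 → eval y F = 0) :
    F = 0 := by
  have hXF : X i * F = 0 := MvPolynomial.funext fun y => by
    by_cases hy : y i = 0 <;> simp [hy, h]
  exact (mul_eq_zero.mp hXF).resolve_left (X_ne_zero i)

noncomputable def invPPreimage (n : ℕ) (hn : 2 ≤ n) (y : Fin (n - 1) → ℝ) : Fin n → ℝ :=
  fun i =>
    if h : (i : ℕ) = n - 1 then y ⟨n - 2, by omega⟩
    else if (i : ℕ) = n - 2 then 0
    else y ⟨i, by omega⟩ / y ⟨n - 2, by omega⟩ ^ (n - (i : ℕ) - 2)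

lemma invPPreimage_last (n : ℕ) (hn : 2 ≤ n) (y : Fin (n - 1) → ℝ) :
    invPPreimage n hn y ⟨n - 1, by omega⟩ = y ⟨n - 2, by omega⟩ := by
  simp [invPPreimage]

lemma invPPreimage_penultimate (n : ℕ) (hn : 2 ≤ n) (y : Fin (n - 1) → ℝ) :
    invPPreimage n hn y ⟨n - 2, by omega⟩ = 0 := by
  simp [invPPreimage, show n - 2 ≠ n - 1 by omega]

lemma invP_invPPreimage (n : ℕ) (hn : 2 ≤ n) (y : Fin (n - 1) → ℝ)
    (hy : y ⟨n - 2, by omega⟩ ≠ 0) (r : Fin (n - 1)) :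
    invP n hn r (invPPreimage n hn y) = y r := by
  unfold invP
  rw [invPPreimage_last, invPPreimage_penultimate, zero_div, neg_zero, uniAct_zero]
  split_ifs with hr
  · exact congrArg y (Fin.ext hr.symm)
  · have hr' : (r : ℕ) ≠ n - 1 := by omega
    simp only [invPPreimage, dif_neg hr', if_neg hr]
    exact mul_div_cancel₀ _ (pow_ne_zero _ hy)

/-- The functions `P₁, …, P_{n−1}` are algebraically independent over `ℝ`
(on the open set `xₙ ≠ 0`). -/
theorem invP_algebraically_independent (n : ℕ) (hn : 2 ≤ n) :
    ¬ ∃ F : MvPolynomial (Fin (n - 1)) ℝ, F ≠ 0 ∧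
      ∀ x : Fin n → ℝ, x ⟨n - 1, by omega⟩ ≠ 0 →
        MvPolynomial.eval (fun r => invP n hn r x) F = 0 := by
  rintro ⟨F, hF, hrel⟩
  refine hF (MvPolynomial.eq_zero_of_eval_eq_zero_of_ne_zero ⟨n - 2, by omega⟩ fun y hy => ?_)
  have hx : invPPreimage n hn y ⟨n - 1, by omega⟩ ≠ 0 := by
    rwa [invPPreimage_last]
  simpa only [invP_invPPreimage n hn y hy] using hrel _ hx
end

section
/- Let n ≥ 1 and let f : Mₙ(ℂ) → Mₙ(ℂ) be a bijective ℂ-linear map. Then f(U(n)) = U(n) if and only if there exist unitary matrices u, v ∈ U(n) such that either f(x) = u x v for all x ∈ Mₙ(ℂ), or f(x) = u xᵀ v for all x ∈ Mₙ(ℂ). -/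
/-!
Normalize so that `f 1 = 1`. For a star projection `p` and `|z| = 1` the matrix `1 + (z - 1) • p`
is unitary; the cases `z = -1` and `z = i` show that `f` maps star projections to star
projections, and orthogonal ones to orthogonal ones. Through the spectral theorem `f` is then a
Jordan `*`-homomorphism on Hermitian matrices and, by polarization, on all matrices. Herstein's
identity and the primeness of `Mₙ(ℂ)` make a surjective Jordan homomorphism multiplicative or
antimultiplicative; after composing with the transpose in the second case, Skolem–Noether writes
it as `x ↦ a x a⁻¹`, and `*`-preservation forces `a* a` to be a positive scalar, so that `a`
rescales to a unitary.
-/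

open Matrix ComplexStarModule

theorem forall_or_forall_of_forall_or {M : Type*} [AddCommGroup M] {P Q : M → Prop}
    (hP : ∀ a b, P a → P b → P (a - b)) (hQ : ∀ a b, Q a → Q b → Q (a - b))
    (h : ∀ a, P a ∨ Q a) : (∀ a, P a) ∨ ∀ a, Q a := by
  by_contra! ⟨⟨a, ha⟩, ⟨b, hb⟩⟩
  have hQa : Q a := (h a).resolve_left ha
  have hPb : P b := (h b).resolve_right hb
  rcases h (a + b) with hab | hab
  · exact ha (by simpa using hP _ _ hab hPb)
  · exact hb (by simpa using hQ _ _ hab hQa)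

section Jordan

variable {R S F : Type*} [Ring R] [Ring S] [FunLike F R S] [AddMonoidHomClass F R S] {G : F}

theorem map_mul_add_mul_of_map_mul_self (hG : ∀ x, G (x * x) = G x * G x) (x y : R) :
    G (x * y + y * x) = G x * G y + G y * G x := by
  calc G (x * y + y * x) = G ((x + y) * (x + y)) - G (x * x) - G (y * y) := by
        rw [show (x + y) * (x + y) = x * x + (x * y + y * x) + y * y by noncomm_ring]
        simp only [map_add]
        abel
    _ = G x * G y + G y * G x := by rw [hG, hG, hG, map_add]; noncomm_ring

theorem map_mul_mul_of_map_mul_self [IsAddTorsionFree S] (hG : ∀ x, G (x * x) = G x * G x)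
    (x y : R) : G (x * y * x) = G x * G y * G x := by
  have hJ := map_mul_add_mul_of_map_mul_self hG
  have h := hJ x (x * y + y * x)
  rw [show x * (x * y + y * x) + (x * y + y * x) * x
      = (x * x * y + y * (x * x)) + (x * y * x + x * y * x) by noncomm_ring,
    map_add, hJ, hG, hJ, map_add] at h
  refine nsmul_right_injective two_ne_zero ?_
  simp only [two_nsmul]
  calc G (x * y * x) + G (x * y * x)
      = G x * (G x * G y + G y * G x) + (G x * G y + G y * G x) * G x
        - (G x * G x * G y + G y * (G x * G x)) := by rw [← h]; abel
    _ = G x * G y * G x + G x * G y * G x := by noncomm_ring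

theorem map_mul_mul_add_mul_mul_of_map_mul_self [IsAddTorsionFree S]
    (hG : ∀ x, G (x * x) = G x * G x) (x y z : R) :
    G (x * y * z + z * y * x) = G x * G y * G z + G z * G y * G x := by
  have hT := map_mul_mul_of_map_mul_self hG
  calc G (x * y * z + z * y * x)
      = G ((x + z) * y * (x + z)) - G (x * y * x) - G (z * y * z) := by
        rw [show (x + z) * y * (x + z) = x * y * x + z * y * z + (x * y * z + z * y * x) by
          noncomm_ring]
        simp only [map_add]
        abel
    _ = _ := by rw [hT, hT, hT, map_add]; noncomm_ring

theorem herstein_identity_of_map_mul_self [IsAddTorsionFree S]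
    (hG : ∀ x, G (x * x) = G x * G x) (x y z : R) :
    (G (x * y) - G x * G y) * G z * (G (x * y) - G y * G x)
      + (G (x * y) - G y * G x) * G z * (G (x * y) - G x * G y) = 0 := by
  have hT := map_mul_mul_of_map_mul_self hG
  have hyx : G (y * x) = G x * G y + G y * G x - G (x * y) := by
    rw [← map_mul_add_mul_of_map_mul_self hG, map_add]; abel
  have h := map_mul_mul_add_mul_mul_of_map_mul_self hG (x * y) z (y * x)
  rw [show x * y * z * (y * x) + y * x * z * (x * y) = x * (y * z * y) * x + y * (x * z * x) * y by
    noncomm_ring, map_add, hT, hT, hT, hT, hyx] at h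
  rw [← sub_eq_zero.mpr h]
  noncomm_ring

end Jordan

namespace Matrix

section Semiring

variable {ι α : Type*} [Fintype ι] [DecidableEq ι] [Semiring α]

theorem mul_single_mul_apply (A B : Matrix ι ι α) (i j k l : ι) (c : α) :
    (A * single k l c * B) i j = A i k * c * B l j := by
  rw [mul_assoc, mul_apply, Fintype.sum_eq_single k fun s hs => by
    rw [single_mul_apply_of_ne _ _ _ _ _ hs, mul_zero], single_mul_apply_same, mul_assoc]

theorem mul_single_one_eq_sum (x : Matrix ι ι α) (i j : ι) :
    x * single i j 1 = ∑ k, x k i • single k j 1 := by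
  ext r s
  by_cases hjs : j = s <;> simp [hjs, mul_apply, single_apply, Matrix.sum_apply]

theorem single_mul_single_one (i j k l : ι) :
    single i j (1 : α) * single k l 1 = if j = k then single i l 1 else 0 := by
  split_ifs with h
  · rw [h, single_mul_single_same, one_mul]
  · exact single_mul_single_of_ne (h := h) ..

end Semiring

section Domain

variable {ι K : Type*} [Fintype ι] [DecidableEq ι] [CommRing K] [IsDomain K] [CharZero K]

theorem eq_zero_or_eq_zero_of_forall_mul_mul_add_mul_mul_eq_zero
    {A B : Matrix ι ι K} (h : ∀ m, A * m * B + B * m * A = 0) : A = 0 ∨ B = 0 := by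
  by_contra! ⟨hA, hB⟩
  obtain ⟨i, k, hAik⟩ : ∃ i k, A i k ≠ 0 := by simpa [← Matrix.ext_iff] using hA
  obtain ⟨i', k', hBik'⟩ : ∃ i k, B i k ≠ 0 := by simpa [← Matrix.ext_iff] using hB
  have entry : ∀ i k l j, A i k * B l j + B i k * A l j = 0 := fun i k l j => by
    simpa [mul_single_mul_apply] using congr_fun₂ (h (single k l 1)) i j
  have hBik : B i k ≠ 0 := fun hz => mul_ne_zero hAik hBik' (by simpa [hz] using entry i k i' k')
  have : A i k * B i k + A i k * B i k = 0 := by linear_combination entry i k i k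
  exact mul_ne_zero hAik hBik (by simpa using this)

theorem map_mul_or_map_mul_rev_of_map_mul_self {R F : Type*} [Ring R]
    [FunLike F R (Matrix ι ι K)] [AddMonoidHomClass F R (Matrix ι ι K)] {G : F}
    (hG : Function.Surjective G) (hsq : ∀ x, G (x * x) = G x * G x) :
    (∀ x y, G (x * y) = G x * G y) ∨ ∀ x y, G (x * y) = G y * G x := by
  have : IsAddTorsionFree (Matrix ι ι K) := .of_isTorsionFree K _
  have pointwise (x y : R) : G (x * y) = G x * G y ∨ G (x * y) = G y * G x := by
    simp only [← sub_eq_zero (a := G (x * y))]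
    refine eq_zero_or_eq_zero_of_forall_mul_mul_add_mul_mul_eq_zero fun m => ?_
    obtain ⟨z, rfl⟩ := hG m
    exact herstein_identity_of_map_mul_self hsq x y z
  have each_y (y : R) : (∀ x, G (x * y) = G x * G y) ∨ ∀ x, G (x * y) = G y * G x :=
    forall_or_forall_of_forall_or
      (fun a b ha hb => by simp only [sub_mul, map_sub, ha, hb])
      (fun a b ha hb => by simp only [sub_mul, mul_sub, map_sub, ha, hb]) (pointwise · y)
  obtain h | h := forall_or_forall_of_forall_or
    (fun a b ha hb x => by simp only [mul_sub, map_sub, ha x, hb x])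
    (fun a b ha hb x => by simp only [mul_sub, sub_mul, map_sub, ha x, hb x]) each_y
  · exact .inl fun x y => h y x
  · exact .inr fun x y => h y x

end Domain

variable {ι K : Type*} [Fintype ι] [DecidableEq ι] [Field K]

-- Skolem–Noether for `Matrix ι ι K`
theorem exists_units_algEquiv_apply_eq [Nonempty ι] (e : Matrix ι ι K ≃ₐ[K] Matrix ι ι K) :
    ∃ a : (Matrix ι ι K)ˣ, ∀ x : Matrix ι ι K,
      e x = a * x * (↑a⁻¹ : Matrix ι ι K) := by
  obtain ⟨o⟩ := ‹Nonempty ι›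
  obtain ⟨p, q, hpq⟩ : ∃ p q, e (single o o 1) p q ≠ 0 := by
    have : single o o (1 : K) ≠ 0 := fun h =>
      one_ne_zero (α := K) (by simpa using congr_fun₂ h o o)
    by_contra! h
    exact (map_ne_zero_iff e e.injective).mpr this (Matrix.ext h)
  let a : Matrix ι ι K := of fun r i => e (single i o 1) r q
  let b : Matrix ι ι K := of fun j s => e (single o j 1) p s / e (single o o 1) p q
  have hba : b * a = 1 := by
    ext j i
    calc (b * a) j i = (e (single o j 1) * e (single i o 1)) p q / e (single o o 1) p q := by
          simp only [a, b, mul_apply, of_apply, Finset.sum_div, div_mul_eq_mul_div]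
      _ = (1 : Matrix ι ι K) j i := by
          rw [← map_mul, single_mul_single_one]
          split_ifs with h
          · subst h; simp [hpq]
          · simp [h]
  have hintertwine (x : Matrix ι ι K) : e x * a = a * x := by
    ext r i
    calc (e x * a) r i = (e x * e (single i o 1)) r q := by simp [a, mul_apply]
      _ = ∑ k, x k i * e (single k o 1) r q := by
          rw [← map_mul, mul_single_one_eq_sum, map_sum, Matrix.sum_apply]
          simp only [map_smul, smul_apply, smul_eq_mul]
      _ = (a * x) r i := by simp [a, mul_apply, mul_comm]
  have hab : a * b = 1 := mul_eq_one_comm.mpr hba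
  refine ⟨⟨a, b, hab, hba⟩, fun x => ?_⟩
  show e x = a * x * b
  rw [← hintertwine, mul_assoc, hab, mul_one]

theorem exists_pos_star_mul_self_eq_smul_one {𝕜 : Type*} [RCLike 𝕜] [Nonempty ι]
    {A : Matrix ι ι 𝕜} (hA : IsUnit A) (hcomm : ∀ y, star A * A * y = y * (star A * A)) :
    ∃ ρ : ℝ, 0 < ρ ∧ star A * A = (ρ : 𝕜) • 1 := by
  obtain ⟨o⟩ := ‹Nonempty ι›
  obtain ⟨r, hr⟩ := mem_range_scalar_of_commute_single (M := star A * A)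
    fun i j _ => (hcomm _).symm
  rw [scalar_apply, ← smul_one_eq_diagonal] at hr
  -- the diagonal entry `(A* A) o o` is the squared norm of the `o`-th column of `A`
  have hr_eq : r = ((∑ s, ‖A s o‖ ^ 2 : ℝ) : 𝕜) := by
    simpa [mul_apply, RCLike.conj_mul] using congr_fun₂ hr o o
  refine ⟨_, (Finset.sum_nonneg fun _ _ => by positivity).lt_of_ne' fun h0 => ?_,
    hr_eq ▸ hr.symm⟩
  have hunit : IsUnit (star A * A) := hA.star.mul hA
  rw [← hr, hr_eq, h0] at hunit
  simp at hunit

theorem exists_unitary_starAlgEquiv_eq_conj {𝕜 : Type*} [RCLike 𝕜] [Nonempty ι]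
    (e : Matrix ι ι 𝕜 ≃⋆ₐ[𝕜] Matrix ι ι 𝕜) :
    ∃ u : unitary (Matrix ι ι 𝕜), e = Unitary.conjStarAlgAut 𝕜 _ u := by
  obtain ⟨a, ha⟩ := exists_units_algEquiv_apply_eq e.toAlgEquiv
  simp only [StarAlgEquiv.coe_toAlgEquiv] at ha
  set A : Matrix ι ι 𝕜 := ↑a with hA
  have hcomm (y : Matrix ι ι 𝕜) : star A * A * y = y * (star A * A) := by
    have h := map_star e (star y)
    rw [ha, ha, star_star, star_mul, star_mul, star_star] at h
    calc star A * A * y = star A * (A * y * ↑a⁻¹) * A := by simp [A, mul_assoc]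
      _ = y * (star A * A) := by
          rw [h, ← mul_assoc (star _), ← star_mul, Units.inv_mul, star_one, one_mul, mul_assoc]
  obtain ⟨ρ, hρ, hAA⟩ := exists_pos_star_mul_self_eq_smul_one a.isUnit hcomm
  set c : 𝕜 := (((√ρ)⁻¹ : ℝ) : 𝕜)
  have hc : star c * c * ρ = 1 := by
    simp only [c, RCLike.star_def, RCLike.conj_ofReal]
    norm_cast
    field_simp
    exact (Real.sq_sqrt hρ.le).symm
  have hstarA : star A = (ρ : 𝕜) • ↑a⁻¹ := by
    calc star A = star A * A * ↑a⁻¹ := by rw [mul_assoc, hA, a.mul_inv, mul_one]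
      _ = (ρ : 𝕜) • ↑a⁻¹ := by rw [hAA, smul_one_mul]
  refine ⟨⟨c • A, ?_⟩, StarAlgEquiv.ext fun x => ?_⟩
  · rw [mem_unitaryGroup_iff', star_smul, smul_mul_smul_comm, hAA, smul_smul, hc, one_smul]
  · rw [Unitary.conjStarAlgAut_apply]
    calc e x = A * x * ↑a⁻¹ := ha x
      _ = (star c * c * ρ) • (A * x * ↑a⁻¹) := by rw [hc, one_smul]
      _ = _ := by
        simp only [star_smul, hstarA, smul_mul_assoc, mul_smul_comm, smul_smul]
        rw [mul_right_comm]

end Matrix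

theorem add_I_smul_mul_add_I_smul {R : Type*} [Ring R] [Algebra ℂ R] (a b : R) :
    (a + Complex.I • b) * (a + Complex.I • b) =
      a * a + Complex.I • (a * b + b * a) - b * b := by
  simp only [mul_add, add_mul, smul_mul_assoc, mul_smul_comm, smul_smul, Complex.I_mul_I,
    neg_one_smul, smul_add]
  abel

theorem sum_smul_mul_sum_smul_of_orthogonal {ι R A : Type*} [Fintype ι] [CommSemiring R]
    [Semiring A] [Algebra R A] {P : ι → A} (hP : ∀ k, IsIdempotentElem (P k))
    (horth : Pairwise fun k l => P k * P l = 0) (c : ι → R) :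
    (∑ k, c k • P k) * (∑ k, c k • P k) = ∑ k, (c k * c k) • P k := by
  rw [Finset.sum_mul_sum]
  refine Finset.sum_congr rfl fun k _ => ?_
  rw [Finset.sum_eq_single k (fun l _ hlk => by rw [smul_mul_smul_comm, horth hlk.symm, smul_zero])
    (by simp), smul_mul_smul_comm, (hP k).eq]

theorem IsStarProjection.one_add_smul_mem_unitary {R A : Type*} [CommRing R] [StarRing R]
    [Ring A] [StarRing A] [Algebra R A] [StarModule R A] {p : A} (hp : IsStarProjection p)
    {z : R} (hz : z ∈ unitary R) : 1 + (z - 1) • p ∈ unitary A := by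
  have expand (a b : R) : (1 + a • p) * (1 + b • p) = 1 + (a + b + a * b) • p := by
    simp only [mul_add, add_mul, one_mul, mul_one, smul_mul_smul_comm, hp.isIdempotentElem.eq]
    module
  have hstar : star (1 + (z - 1) • p) = 1 + (star z - 1) • p := by
    simp [star_smul, hp.isSelfAdjoint.star_eq]
  rw [Unitary.mem_iff, hstar, expand, expand]
  constructor
  · linear_combination (norm := module) Unitary.star_mul_self_of_mem hz • p
  · linear_combination (norm := module) Unitary.mul_star_self_of_mem hz • p

section StarAlgebra

variable {A B : Type*} [Ring A] [StarRing A] [Algebra ℂ A] [StarModule ℂ A]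
  [Ring B] [Algebra ℂ B] {G : A →ₗ[ℂ] B}

theorem LinearMap.map_mul_self_of_isSelfAdjoint
    (hG : ∀ h, IsSelfAdjoint h → G (h * h) = G h * G h) (x : A) :
    G (x * x) = G x * G x := by
  have hanti {a b : A} (ha : IsSelfAdjoint a) (hb : IsSelfAdjoint b) :
      G (a * b + b * a) = G a * G b + G b * G a := by
    calc G (a * b + b * a) = G ((a + b) * (a + b)) - G (a * a) - G (b * b) := by
          rw [show (a + b) * (a + b) = a * a + (a * b + b * a) + b * b by noncomm_ring]
          simp only [map_add]
          abel
      _ = G a * G b + G b * G a := by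
          rw [hG _ ha, hG _ hb, hG _ (ha.add hb), map_add]; noncomm_ring
  rw [← realPart_add_I_smul_imaginaryPart x, add_I_smul_mul_add_I_smul, map_sub, map_add,
    map_smul, hanti (ℜ x).2 (ℑ x).2, hG _ (ℜ x).2, hG _ (ℑ x).2, map_add, map_smul,
    add_I_smul_mul_add_I_smul]

variable [StarRing B] [StarModule ℂ B]

theorem LinearMap.map_star_of_isSelfAdjoint (hG : ∀ h, IsSelfAdjoint h → IsSelfAdjoint (G h))
    (x : A) : G (star x) = star (G x) := by
  rw [← realPart_add_I_smul_imaginaryPart x]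
  simp only [star_add, star_smul, map_add, map_smul, (ℜ x).2.star_eq, (ℑ x).2.star_eq,
    (hG _ (ℜ x).2).star_eq, (hG _ (ℑ x).2).star_eq, Complex.star_def, Complex.conj_I]

variable (hG1 : G 1 = 1) (hGU : ∀ u ∈ unitary A, G u ∈ unitary B)
include hG1 hGU

theorem IsStarProjection.map_of_map_unitary {p : A} (hp : IsStarProjection p) :
    IsStarProjection (G p) := by
  set Q := G p
  have key (z : ℂ) (hz : z ∈ unitary ℂ) :
      (star z - 1) • star Q + (z - 1) • Q + ((star z - 1) * (z - 1)) • (star Q * Q) = 0 := by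
    have h := Unitary.star_mul_self_of_mem (hGU _ (hp.one_add_smul_mem_unitary hz))
    simp only [map_add, map_smul, hG1, star_add, star_one, star_smul, star_sub, mul_add, add_mul,
      one_mul, mul_one, smul_mul_smul_comm] at h
    linear_combination (norm := module) h
  have hneg := key (-1) (by simp [Unitary.mem_iff])
  have hI := key Complex.I (by simp [Unitary.mem_iff, Complex.conj_I])
  have hcoeff : (star Complex.I - 1) * (Complex.I - 1) = 2 := by
    simp only [Complex.star_def, Complex.conj_I]
    linear_combination -Complex.I_sq
  rw [hcoeff] at hI
  simp only [Complex.star_def, Complex.conj_I, star_neg, star_one] at hneg hI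
  have hsa : star Q = Q := by
    refine smul_right_injective B Complex.I_ne_zero ?_
    linear_combination (norm := module) (1 / 2 : ℂ) • hneg - hI
  refine ⟨?_, hsa⟩
  rw [hsa] at hneg
  show Q * Q = Q
  linear_combination (norm := module) (1 / 4 : ℂ) • hneg

theorem IsStarProjection.map_mul_map_eq_zero_of_map_unitary {p q : A} (hp : IsStarProjection p)
    (hq : IsStarProjection q) (hpq : p * q = 0) : G p * G q = 0 := by
  have : IsAddTorsionFree B := .of_isTorsionFree ℂ B
  have hp' := (hp.map_of_map_unitary hG1 hGU).isIdempotentElem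
  have hq' := (hq.map_of_map_unitary hG1 hGU).isIdempotentElem
  have hsum := ((hp.add hq hpq).map_of_map_unitary hG1 hGU).isIdempotentElem
  rw [map_add] at hsum
  exact hp'.mul_eq_zero_of_anticommute ((hp'.add_iff hq').mp hsum)

end StarAlgebra

namespace Matrix

variable {ι : Type*} [Fintype ι] [DecidableEq ι]

theorem isStarProjection_single_one {𝕜 : Type*} [CommSemiring 𝕜] [StarRing 𝕜] (k : ι) :
    IsStarProjection (single k k (1 : 𝕜)) :=
  ⟨by simp [IsIdempotentElem],
    by simp [IsSelfAdjoint, star_eq_conjTranspose, conjTranspose_single]⟩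

theorem IsHermitian.exists_eq_sum_smul_isStarProjection {𝕜 : Type*} [RCLike 𝕜]
    {H : Matrix ι ι 𝕜} (hH : H.IsHermitian) :
    ∃ (P : ι → Matrix ι ι 𝕜) (d : ι → ℝ), (∀ k, IsStarProjection (P k)) ∧
      (Pairwise fun k l => P k * P l = 0) ∧ H = ∑ k, (d k : 𝕜) • P k := by
  let φ := Unitary.conjStarAlgAut 𝕜 _ hH.eigenvectorUnitary
  refine ⟨fun k => φ (single k k 1), hH.eigenvalues,
    fun k => (isStarProjection_single_one k).map φ, fun k l hkl => ?_, ?_⟩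
  · dsimp only
    rw [← map_mul, single_mul_single_of_ne (h := hkl), map_zero]
  · conv_lhs => rw [hH.spectral_theorem, ← sum_single_eq_diagonal]
    simp only [map_sum, ← map_smul, smul_single, smul_eq_mul, mul_one, Function.comp_apply]
    rfl

theorem isSelfAdjoint_map_and_map_mul_self_of_map_unitary {B : Type*} [Ring B] [StarRing B]
    [Algebra ℂ B] [StarModule ℂ B] {G : Matrix ι ι ℂ →ₗ[ℂ] B} (hG1 : G 1 = 1)
    (hGU : ∀ u ∈ unitary (Matrix ι ι ℂ), G u ∈ unitary B) {H : Matrix ι ι ℂ}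
    (hH : IsSelfAdjoint H) : IsSelfAdjoint (G H) ∧ G (H * H) = G H * G H := by
  obtain ⟨P, d, hP, horth, rfl⟩ := IsHermitian.exists_eq_sum_smul_isStarProjection hH
  have hQ k := (hP k).map_of_map_unitary hG1 hGU
  have hQorth : Pairwise fun k l => G (P k) * G (P l) = 0 := fun k l hkl =>
    (hP k).map_mul_map_eq_zero_of_map_unitary hG1 hGU (hP l) (horth hkl)
  simp only [map_sum, map_smul]
  refine ⟨isSelfAdjoint_sum _ fun k _ =>
    IsSelfAdjoint.smul (Complex.conj_ofReal (d k)) (hQ k).isSelfAdjoint, ?_⟩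
  rw [sum_smul_mul_sum_smul_of_orthogonal (fun k => (hP k).isIdempotentElem) horth,
    sum_smul_mul_sum_smul_of_orthogonal (fun k => (hQ k).isIdempotentElem) hQorth]
  simp only [map_sum, map_smul]

theorem exists_unitary_eq_conj_or_conj_transpose [Nonempty ι]
    (G : Matrix ι ι ℂ ≃ₗ[ℂ] Matrix ι ι ℂ) (hG1 : G 1 = 1)
    (hGU : ∀ u ∈ unitary (Matrix ι ι ℂ), G u ∈ unitary (Matrix ι ι ℂ)) :
    ∃ w ∈ unitary (Matrix ι ι ℂ),
      (∀ x, G x = w * x * star w) ∨ ∀ x, G x = w * xᵀ * star w := by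
  have hsa {h : Matrix ι ι ℂ} (hh : IsSelfAdjoint h) :=
    isSelfAdjoint_map_and_map_mul_self_of_map_unitary (G := G.toLinearMap) hG1 hGU hh
  have hstar := G.toLinearMap.map_star_of_isSelfAdjoint fun _ hh => (hsa hh).1
  have hsq := G.toLinearMap.map_mul_self_of_isSelfAdjoint fun _ hh => (hsa hh).2
  rcases map_mul_or_map_mul_rev_of_map_mul_self G.surjective hsq with hmul | hrev
  · obtain ⟨w, hw⟩ := exists_unitary_starAlgEquiv_eq_conj
      (StarAlgEquiv.ofAlgEquiv (AlgEquiv.ofLinearEquiv G hG1 hmul) hstar)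
    exact ⟨w, w.2, .inl fun x => DFunLike.congr_fun hw x⟩
  · let G' := (transposeLinearEquiv ι ι ℂ ℂ).trans G
    have hG'1 : G' 1 = 1 := by simpa [G'] using hG1
    have hG'mul (x y : Matrix ι ι ℂ) : G' (x * y) = G' x * G' y := by simp [G', hrev]
    have hG'star (x : Matrix ι ι ℂ) : G' (star x) = star (G' x) := hstar xᵀ
    obtain ⟨w, hw⟩ := exists_unitary_starAlgEquiv_eq_conj
      (StarAlgEquiv.ofAlgEquiv (AlgEquiv.ofLinearEquiv G' hG'1 hG'mul) hG'star)
    exact ⟨w, w.2, .inr fun x => DFunLike.congr_fun hw xᵀ⟩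

end Matrix

theorem Unitary.image_mul_mul {R : Type*} [Monoid R] [StarMul R] {u v : R}
    (hu : u ∈ unitary R) (hv : v ∈ unitary R) :
    (fun x => u * x * v) '' unitary R = unitary R := by
  ext y
  refine ⟨?_, fun hy =>
    ⟨star u * y * star v, mul_mem (mul_mem (star_mem hu) hy) (star_mem hv), ?_⟩⟩
  · rintro ⟨x, hx, rfl⟩
    exact mul_mem (mul_mem hu hx) hv
  · simp [mul_assoc, Unitary.star_mul_self_of_mem hv, ← mul_assoc u,
      Unitary.mul_star_self_of_mem hu]

theorem Matrix.image_transpose_unitaryGroup {ι R : Type*} [Fintype ι] [DecidableEq ι]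
    [CommRing R] [StarRing R] :
    transpose '' (unitaryGroup ι R : Set (Matrix ι ι R)) = unitaryGroup ι R := by
  ext y
  exact ⟨fun ⟨x, hx, hxy⟩ => hxy ▸ transpose_mem_unitaryGroup_iff.mpr hx,
    fun hy => ⟨yᵀ, transpose_mem_unitaryGroup_iff.mpr hy, transpose_transpose y⟩⟩

/-- For `n ≥ 1`, a bijective `ℂ`-linear map `f` of `Mₙ(ℂ)` satisfies
`f(U(n)) = U(n)` if and only if there are unitary `u, v` with `f(x) = uxv` for all `x`,
or `f(x) = uxᵀv` for all `x`. -/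
theorem complex_linear_preserver_of_unitary
    (n : ℕ) (hn : 1 ≤ n)
    (f : Matrix (Fin n) (Fin n) ℂ ≃ₗ[ℂ] Matrix (Fin n) (Fin n) ℂ) :
    f '' (Matrix.unitaryGroup (Fin n) ℂ : Set (Matrix (Fin n) (Fin n) ℂ)) =
      (Matrix.unitaryGroup (Fin n) ℂ : Set (Matrix (Fin n) (Fin n) ℂ))
    ↔ ∃ u v : Matrix (Fin n) (Fin n) ℂ,
        u ∈ Matrix.unitaryGroup (Fin n) ℂ ∧ v ∈ Matrix.unitaryGroup (Fin n) ℂ ∧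
        ((∀ x : Matrix (Fin n) (Fin n) ℂ, f x = u * x * v) ∨
         (∀ x : Matrix (Fin n) (Fin n) ℂ, f x = u * xᵀ * v)) := by
  have : Nonempty (Fin n) := ⟨⟨0, hn⟩⟩
  constructor
  · intro hf
    have hfU (x) (hx : x ∈ unitaryGroup (Fin n) ℂ) : f x ∈ unitaryGroup (Fin n) ℂ := by
      rw [← SetLike.mem_coe, ← hf]
      exact Set.mem_image_of_mem f hx
    have hu := hfU 1 (one_mem _)
    let u : unitary (Matrix (Fin n) (Fin n) ℂ) := ⟨f 1, hu⟩
    let G := f.trans ((Unitary.toUnits (star u)).mulLeftLinearEquiv ℂ _)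
    have hG (x) : f x = u * G x := by simp [G, ← mul_assoc]
    obtain ⟨w, hw, hGw⟩ := exists_unitary_eq_conj_or_conj_transpose G
      (by simp [G, u, Unitary.star_mul_self_of_mem hu])
      fun x hx => mul_mem (Unitary.star_mem hu) (hfU x hx)
    refine ⟨u * w, star w, mul_mem hu hw, Unitary.star_mem hw,
      hGw.imp (fun h x => ?_) fun h x => ?_⟩
    all_goals rw [hG, h]; noncomm_ring
  · rintro ⟨u, v, hu, hv, h | h⟩
    · rw [show ⇑f = fun x => u * x * v from funext h, Unitary.image_mul_mul hu hv]
    · rw [show ⇑f = (fun x => u * x * v) ∘ transpose from funext h, Set.image_comp,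
        image_transpose_unitaryGroup, Unitary.image_mul_mul hu hv]
end

section
/- Let E be a finite-dimensional real normed vector space and let f : E → E be a bijective ℝ-linear map that maps the set of extreme points of the closed unit ball of E onto itself. Then f is an isometry: ‖f(x)‖ = ‖x‖ for all x ∈ E. -/
/-- A bijective linear map of a finite-dimensional real normed space that maps
the set of extreme points of the closed unit ball onto itself is an isometry. -/
theorem isometry_of_maps_extremePoints
    (E : Type*) [NormedAddCommGroup E] [NormedSpace ℝ E] [FiniteDimensional ℝ E]
    (f : E ≃ₗ[ℝ] E)
    (hf : f '' Set.extremePoints ℝ (Metric.closedBall (0 : E) 1) =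
      Set.extremePoints ℝ (Metric.closedBall (0 : E) 1)) :
    ∀ x : E, ‖f x‖ = ‖x‖ := by
  set B : Set E := Metric.closedBall (0 : E) 1 with hB
  have hcomp : IsCompact B := isCompact_closedBall _ _
  have hconv : Convex ℝ B := convex_closedBall _ _
  have hKM : closure (convexHull ℝ (B.extremePoints ℝ)) = B :=
    closure_convexHull_extremePoints hcomp hconv
  let g := f.toContinuousLinearEquiv
  have himg : f '' B = B := by
    conv_lhs => rw [← hKM]
    have h1 : f '' closure (convexHull ℝ (B.extremePoints ℝ)) =
        closure (f '' convexHull ℝ (B.extremePoints ℝ)) :=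
      g.toHomeomorph.image_closure _
    rw [h1, show f '' convexHull ℝ (B.extremePoints ℝ)
        = convexHull ℝ (f '' B.extremePoints ℝ) from (f : E →ₗ[ℝ] E).image_convexHull _,
      hf, hKM]
  have key : ∀ (h : E ≃ₗ[ℝ] E), h '' B = B → ∀ x : E, ‖h x‖ ≤ ‖x‖ := by
    intro h hh x
    rcases eq_or_ne x 0 with rfl | hx
    · simp
    · have hxm : ‖x‖⁻¹ • x ∈ B := by
        simp [hB, norm_smul, abs_of_nonneg (inv_nonneg.2 (norm_nonneg x)),
          inv_mul_cancel₀ (norm_ne_zero_iff.2 hx)]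
      have : h (‖x‖⁻¹ • x) ∈ B := hh ▸ Set.mem_image_of_mem _ hxm
      have := Metric.mem_closedBall.1 this
      rw [map_smul, dist_zero_right, norm_smul, Real.norm_eq_abs,
        abs_of_nonneg (inv_nonneg.2 (norm_nonneg x))] at this
      have hx' : (0:ℝ) < ‖x‖ := norm_pos_iff.2 hx
      calc ‖h x‖ = ‖x‖ * (‖x‖⁻¹ * ‖h x‖) := by field_simp
        _ ≤ ‖x‖ * 1 := by nlinarith
        _ = ‖x‖ := mul_one _
  intro x
  have h1 := key f himg x
  have himg' : f.symm '' B = B := by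
    conv_lhs => rw [← himg]
    rw [Set.image_image]; simp
  have h2 := key f.symm himg' (f x)
  simp only [LinearEquiv.symm_apply_apply] at h2
  exact le_antisymm h1 h2
end

section
/- Let n ≥ 2 and define, for x ∈ ℝⁿ with xₙ ≠ 0: R(x) = exp(−(x_{n−1}/xₙ)X)·x and Qᵣ(x) = the r-th coordinate of R(x). Then for each r with 1 ≤ r ≤ n−2 there exists a polynomial pᵣ ∈ ℝ[x₁,…,xₙ] such that: (i) pᵣ(x) = xₙ^{n−r−1}·Qᵣ(x) for all x with xₙ ≠ 0, and (ii) pᵣ is G-invariant, i.e. pᵣ(exp(tX)·x) = pᵣ(x) for all t ∈ ℝ and x ∈ ℝⁿ. -/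
/-!
On `{x_L ≠ 0}` the point `R(x) = exp(-(x_P / x_L) X) x` is constant along `G`-orbits: `exp(tX)`
fixes `x_L` and replaces `x_P` by `x_P + t x_L`, so `exp(-((x_P + t x_L) / x_L) X) exp(tX)` is
again `exp(-(x_P / x_L) X)`. The `i`-th coordinate of `R(x)` is
`∑_{j ≥ i} (-(x_P / x_L))^(j-i) / (j-i)! * x_j`, and after multiplying by `x_L^(L-i-1)` each
summand is a monomial (for `j = L` because `x_j = x_L` there). The resulting polynomial is
`G`-invariant on the dense set `{x_L ≠ 0}`, hence everywhere by continuity.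
-/

open Matrix

open MvPolynomial Topology

lemma jordanX_pow (n k : ℕ) :
    jordanX n ^ k = of fun i j : Fin n => if (i : ℕ) + k = j then 1 else 0 := by
  induction k with
  | zero => ext i j; simp [one_apply, Fin.ext_iff]
  | succ k ih =>
    ext i j
    rw [pow_succ, ih, mul_apply]
    by_cases h : (i : ℕ) + k < n
    · rw [Fintype.sum_eq_single ⟨i + k, h⟩ fun l hl => by
        rw [of_apply, if_neg fun e => hl (Fin.ext e.symm), zero_mul]]
      simp [jordanX, add_assoc]
    · rw [of_apply, if_neg (by omega)]
      exact Finset.sum_eq_zero fun l _ => by rw [of_apply, if_neg (by omega), zero_mul]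

lemma jordanX_pow_eq_zero {n k : ℕ} (hk : n ≤ k) : jordanX n ^ k = 0 := by
  ext i j
  rw [jordanX_pow, of_apply, if_neg (by omega), Matrix.zero_apply]

lemma exp_smul_jordanX (n : ℕ) (t : ℝ) :
    NormedSpace.exp (t • jordanX n) =
      of fun i j : Fin n => if i ≤ j then t ^ (j - i : ℕ) / (j - i : ℕ).factorial else 0 := by
  have hnil : ∀ k ∉ Finset.range n, ((k.factorial : ℝ)⁻¹ • (t • jordanX n) ^ k) = 0 :=
    fun k hk => by rw [smul_pow, jordanX_pow_eq_zero (by simpa using hk), smul_zero, smul_zero]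
  rw [NormedSpace.exp_eq_tsum ℝ]
  beta_reduce
  rw [tsum_eq_sum hnil]
  ext i j
  simp only [Matrix.sum_apply, Matrix.smul_apply, smul_pow, jordanX_pow, of_apply, smul_eq_mul,
    mul_ite, mul_one, mul_zero]
  split_ifs with hij
  · rw [Finset.sum_eq_single (j - i : ℕ) (fun k _ hk => if_neg (by omega))
      (fun h => (h (by rw [Finset.mem_range]; omega)).elim), if_pos (by omega), div_eq_inv_mul]
  · exact Finset.sum_eq_zero fun k _ => if_neg (by omega)

lemma uniAct_apply (n : ℕ) (t : ℝ) (x : Fin n → ℝ) (i : Fin n) :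
    uniAct n t x i = ∑ j ∈ Finset.Ici i, t ^ (j - i : ℕ) / (j - i : ℕ).factorial * x j := by
  rw [uniAct, exp_smul_jordanX, ← Finset.filter_le_eq_Ici, Finset.sum_filter]
  simp only [mulVec, dotProduct, of_apply, ite_mul, zero_mul]

lemma uniAct_add (n : ℕ) (s t : ℝ) (x : Fin n → ℝ) :
    uniAct n s (uniAct n t x) = uniAct n (s + t) x := by
  rw [uniAct, uniAct, uniAct, mulVec_mulVec, add_smul,
    ← Matrix.exp_add_of_commute _ _ (((Commute.refl _).smul_left s).smul_right t)]

lemma uniAct_apply_last {n : ℕ} {L : Fin n} (hL : (L : ℕ) + 1 = n) (t : ℝ)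
    (x : Fin n → ℝ) : uniAct n t x L = x L := by
  have hIci : Finset.Ici L = {L} := by
    ext j; simp only [Finset.mem_Ici, Finset.mem_singleton]; omega
  simp [uniAct_apply, hIci]

lemma uniAct_apply_secondLast {n : ℕ} {P L : Fin n} (hL : (L : ℕ) + 1 = n)
    (hP : (P : ℕ) + 1 = L) (t : ℝ) (x : Fin n → ℝ) : uniAct n t x P = x P + t * x L := by
  have hIci : Finset.Ici P = {P, L} := by
    ext j; simp only [Finset.mem_Ici, Finset.mem_singleton, Finset.mem_insert]; omega
  rw [uniAct_apply, hIci, Finset.sum_pair (by omega)]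
  simp [show (L - P : ℕ) = 1 by omega]

noncomputable def clearedSliceCoord (n : ℕ) (i P L : Fin n) : MvPolynomial (Fin n) ℝ :=
  ∑ j ∈ Finset.Ico i L,
      C ((j - i : ℕ).factorial : ℝ)⁻¹ * (-X P) ^ (j - i : ℕ) * X L ^ (L - 1 - j : ℕ) * X j
    + C ((L - i : ℕ).factorial : ℝ)⁻¹ * (-X P) ^ (L - i : ℕ)

lemma eval_clearedSliceCoord {n : ℕ} {i P L : Fin n} (hL : (L : ℕ) + 1 = n) (hiL : i < L)
    (x : Fin n → ℝ) (hx : x L ≠ 0) :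
    eval x (clearedSliceCoord n i P L) = x L ^ (L - i - 1 : ℕ) * uniAct n (-(x P / x L)) x i := by
  have hIci : Finset.Ici i = insert L (Finset.Ico i L) := by
    rw [Finset.Ico_insert_right hiL.le]
    ext j; simp only [Finset.mem_Ici, Finset.mem_Icc]; omega
  rw [uniAct_apply, hIci, Finset.sum_insert Finset.right_notMem_Ico, mul_add, Finset.mul_sum,
    add_comm]
  simp only [clearedSliceCoord, map_add, map_sum, map_mul, map_pow, map_neg, eval_C, eval_X]
  congr 1
  · refine Finset.sum_congr rfl fun j hj => ?_
    rw [Finset.mem_Ico] at hj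
    rw [show (L - i - 1 : ℕ) = (L - 1 - j : ℕ) + (j - i : ℕ) by omega, pow_add, ← neg_div,
      div_pow]
    field_simp
  · generalize hm : (L - i - 1 : ℕ) = m
    rw [show (L - i : ℕ) = m + 1 by omega, ← neg_div, div_pow]
    field_simp
    ring

lemma eval_clearedSliceCoord_uniAct_of_ne_zero {n : ℕ} {i P L : Fin n} (hL : (L : ℕ) + 1 = n)
    (hP : (P : ℕ) + 1 = L) (hiL : i < L) (t : ℝ) (x : Fin n → ℝ) (hx : x L ≠ 0) :
    eval (uniAct n t x) (clearedSliceCoord n i P L) = eval x (clearedSliceCoord n i P L) := by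
  have hyL := uniAct_apply_last hL t x
  have hshift : -(uniAct n t x P / uniAct n t x L) + t = -(x P / x L) := by
    rw [uniAct_apply_secondLast hL hP, hyL]
    field_simp
    ring
  rw [eval_clearedSliceCoord hL hiL _ (hyL ▸ hx), eval_clearedSliceCoord hL hiL x hx, uniAct_add,
    hshift, hyL]

lemma dense_setOf_apply_ne {ι X : Type*} [TopologicalSpace X] (i : ι) (a : X)
    [(𝓝[≠] a).NeBot] : Dense {x : ι → X | x i ≠ a} :=
  (dense_compl_singleton a).preimage (isOpenMap_eval i)

lemma continuous_uniAct (n : ℕ) (t : ℝ) : Continuous (uniAct n t) :=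
  continuous_const.matrix_mulVec continuous_id

lemma eval_clearedSliceCoord_uniAct {n : ℕ} {i P L : Fin n} (hL : (L : ℕ) + 1 = n)
    (hP : (P : ℕ) + 1 = L) (hiL : i < L) (t : ℝ) (x : Fin n → ℝ) :
    eval (uniAct n t x) (clearedSliceCoord n i P L) = eval x (clearedSliceCoord n i P L) := by
  have hcont := continuous_eval (clearedSliceCoord n i P L)
  refine congrFun (Continuous.ext_on (dense_setOf_apply_ne L 0)
    (hcont.comp (continuous_uniAct n t)) hcont fun y hy => ?_) x
  exact eval_clearedSliceCoord_uniAct_of_ne_zero hL hP hiL t y hy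

/-- For each `1 ≤ r ≤ n−2` there is a polynomial `pᵣ ∈ ℝ[x₁,…,xₙ]` which,
on `{xₙ ≠ 0}`, equals `xₙ^{n−r−1}·Qᵣ(x)` (where `Qᵣ(x)` is the `r`-th coordinate of
`R(x) = exp(−(x_{n−1}/xₙ)X)·x`), and which is invariant under the action of
`G = {exp(tX) : t ∈ ℝ}`. -/
theorem exists_invariant_polynomial_P (n : ℕ) (hn : 2 ≤ n)
    (r : ℕ) (hr1 : 1 ≤ r) (hr2 : r ≤ n - 2) :
    ∃ p : MvPolynomial (Fin n) ℝ,
      (∀ x : Fin n → ℝ, x ⟨n - 1, by omega⟩ ≠ 0 →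
        MvPolynomial.eval x p =
          (x ⟨n - 1, by omega⟩) ^ (n - r - 1) *
            uniAct n (-(x ⟨n - 2, by omega⟩ / x ⟨n - 1, by omega⟩)) x ⟨r - 1, by omega⟩) ∧
      (∀ (t : ℝ) (x : Fin n → ℝ),
        MvPolynomial.eval (uniAct n t x) p = MvPolynomial.eval x p) := by
  have hL : n - 1 + 1 = n := by omega
  have hP : n - 2 + 1 = n - 1 := by omega
  have hiL : (⟨r - 1, by omega⟩ : Fin n) < ⟨n - 1, by omega⟩ := Fin.mk_lt_mk.mpr (by omega)
  refine ⟨clearedSliceCoord n ⟨r - 1, by omega⟩ ⟨n - 2, by omega⟩ ⟨n - 1, by omega⟩,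
    fun x hx => ?_, eval_clearedSliceCoord_uniAct hL hP hiL⟩
  rw [eval_clearedSliceCoord hL hiL x hx, show n - 1 - (r - 1) - 1 = n - r - 1 by omega]
end
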